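/- Let G be a minimal non-sofic group and let M be a maximal normal subgroup of G. If M is finitely generated and residually finite, then M is contained in the center Z(G); moreover, in this case G is perfect and G/M is a finitely generated simple group, so G is a perfect central extension of a finitely generated simple group by M. -/

import Mathlib

/-- The normalized Hamming distance between two permutations of `Fin n`:
the number of points where they differ, divided by `n`. -/
noncomputable def permHammingDist {n : ℕ} (σ τ : Equiv.Perm (Fin n)) : ℝ :=
  ((Finset.univ.filter fun i => σ i ≠ τ i).card : ℝ) / n

/-- A group `G` is sofic if for every finite subset `F ⊆ G` and every `ε > 0` there exist
`n ≥ 1` and a map `θ` from `F` to `Sym(Fin n)` (extended to all of `G`) such that: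
(i) `θ` is an `ε`-approximate homomorphism on `F`;
(ii) `θ` almost sends the identity to the identity;
(iii) distinct elements of `F` are sent to permutations at Hamming distance at least `1/4`. -/
def IsSofic (G : Type*) [Group G] : Prop :=
  ∀ (F : Finset G) (ε : ℝ), 0 < ε →
    ∃ n : ℕ, 1 ≤ n ∧ ∃ θ : G → Equiv.Perm (Fin n),
      (∀ g h : G, g ∈ F → h ∈ F → g * h ∈ F →
        permHammingDist (θ g * θ h) (θ (g * h)) < ε) ∧
      ((1 : G) ∈ F → permHammingDist (θ 1) 1 < ε) ∧
      (∀ x y : G, x ∈ F → y ∈ F → x ≠ y → 1 / 4 ≤ permHammingDist (θ x) (θ y))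

/-- A group is minimal non-sofic if it is not sofic but every proper subgroup is sofic. -/
def IsMinimalNonSofic (G : Type*) [Group G] : Prop :=
  ¬ IsSofic G ∧ ∀ H : Subgroup G, H ≠ ⊤ → IsSofic H

/-- `M` is a maximal normal subgroup of `G`: a proper normal subgroup that is maximal
with respect to inclusion among proper normal subgroups. -/
def IsMaximalNormal {G : Type*} [Group G] (M : Subgroup G) : Prop :=
  M.Normal ∧ M ≠ ⊤ ∧ ∀ N : Subgroup G, N.Normal → N ≠ ⊤ → M ≤ N → N = M

/-- A group `M` is residually finite if every nontrivial element avoids some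
normal subgroup of finite index. -/
def IsResiduallyFinite (M : Type*) [Group M] : Prop :=
  ∀ m : M, m ≠ 1 → ∃ N : Subgroup M, N.Normal ∧ N.FiniteIndex ∧ m ∉ N

/-!
Soficity passes from a finite-index subgroup `K` up to `G`: a sofic approximation `θ` of `K` on
`α` induces one of `G` on `(G ⧸ K) × α`, where `g` sends `(q, a)` to `(g • q, θ (κ g q) a)` and
`κ` is the cocycle of a transversal of `K`. Soficity is also a local property, so a minimal
non-sofic group `G` is finitely generated and has no proper subgroup of finite index. Its
abelianization is then a finitely generated abelian group without proper finite-index subgroups,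
hence trivial. For a finite-index normal subgroup `N` of the finitely generated group `M`, the set
`Hom(M, M ⧸ N)` is finite and `G` acts on it by precomposing with conjugation; this action must be
trivial, so every commutator `[g, m]` lies in `N`, and residual finiteness forces it to be `1`.
-/

open Equiv

section Hamming

variable {α β Q : Type*}

noncomputable def hammingCount (σ τ : Perm α) : ℕ := Nat.card {a // σ a ≠ τ a}

theorem permHammingDist_eq {n : ℕ} (σ τ : Perm (Fin n)) :
    permHammingDist σ τ = hammingCount σ τ / n := by
  rw [permHammingDist, hammingCount, Nat.card_eq_fintype_card, Fintype.card_subtype]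

theorem hammingCount_permCongr (e : α ≃ β) (σ τ : Perm α) :
    hammingCount (e.permCongr σ) (e.permCongr τ) = hammingCount σ τ :=
  Nat.card_congr <| (e.subtypeEquiv fun a => by simp [permCongr_apply]).symm

theorem hammingCount_prod [Fintype Q] [Finite α] (σ τ : Perm (Q × α)) :
    hammingCount σ τ = ∑ q, Nat.card {a // σ (q, a) ≠ τ (q, a)} := by
  rw [hammingCount, ← Nat.card_sigma]
  exact Nat.card_congr (subtypeProdEquivSigmaSubtype fun q a => σ (q, a) ≠ τ (q, a))

theorem hammingCount_prodShear [Fintype Q] [DecidableEq Q] [Finite α] (π π' : Perm Q)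
    (f f' : Q → Perm α) :
    hammingCount (prodShear π f) (prodShear π' f') =
      ∑ q, if π q = π' q then hammingCount (f q) (f' q) else Nat.card α := by
  rw [hammingCount_prod]
  refine Finset.sum_congr rfl fun q _ => ?_
  split_ifs with hq
  · simp [hammingCount, hq]
  · simp [hq]

end Hamming

section SoficApprox

universe u

variable {G α β : Type*} [Group G]

def IsSoficApprox (F : Finset G) (ε : ℝ) (θ : G → Perm α) : Prop :=
  (∀ g h : G, g ∈ F → h ∈ F → g * h ∈ F →
    (hammingCount (θ g * θ h) (θ (g * h)) : ℝ) < ε * Nat.card α) ∧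
  ((1 : G) ∈ F → (hammingCount (θ 1) 1 : ℝ) < ε * Nat.card α) ∧
  (∀ x y : G, x ∈ F → y ∈ F → x ≠ y → 1 / 4 * (Nat.card α : ℝ) ≤ hammingCount (θ x) (θ y))

theorem IsSoficApprox.permCongr {F : Finset G} {ε : ℝ} {θ : G → Perm α}
    (hθ : IsSoficApprox F ε θ) (e : α ≃ β) : IsSoficApprox F ε fun g => e.permCongr (θ g) := by
  obtain ⟨hmul, hone, hsep⟩ := hθ
  have h1 : e.permCongr (1 : Perm α) = 1 := e.permCongr_refl
  simp only [IsSoficApprox, ← permCongr_mul, ← h1, hammingCount_permCongr,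
    ← Nat.card_congr e]
  exact ⟨hmul, hone, hsep⟩

theorem isSofic_iff_exists_fin : IsSofic G ↔ ∀ (F : Finset G) (ε : ℝ), 0 < ε →
    ∃ n : ℕ, 1 ≤ n ∧ ∃ θ : G → Perm (Fin n), IsSoficApprox F ε θ := by
  refine forall₃_congr fun F ε _ => exists_congr fun n => and_congr_right fun hn => ?_
  have hn : (0 : ℝ) < n := by exact_mod_cast hn
  simp only [IsSoficApprox, permHammingDist_eq, div_lt_iff₀ hn, le_div_iff₀ hn, Nat.card_fin]

theorem isSofic_of_forall_exists_isSoficApprox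
    (h : ∀ (F : Finset G) (ε : ℝ), 0 < ε →
      ∃ (α : Type u) (_ : Finite α) (_ : Nonempty α) (θ : G → Perm α), IsSoficApprox F ε θ) :
    IsSofic G := by
  refine isSofic_iff_exists_fin.2 fun F ε hε => ?_
  obtain ⟨α, _, _, θ, hθ⟩ := h F ε hε
  exact ⟨Nat.card α, Nat.card_pos, _, hθ.permCongr (Finite.equivFin α)⟩

end SoficApprox

section Local

variable {G : Type*} [Group G]

theorem isSofic_of_forall_isSofic_closure
    (h : ∀ F : Finset G, IsSofic (Subgroup.closure (F : Set G))) : IsSofic G := by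
  classical
  refine isSofic_of_forall_exists_isSoficApprox fun F ε hε => ?_
  set H := Subgroup.closure (F : Set G)
  have hFH : ∀ g ∈ F, g ∈ H := fun g hg => Subgroup.subset_closure hg
  obtain ⟨n, hn, θ, hmul, hone, hsep⟩ := isSofic_iff_exists_fin.1 (h F) (F.subtype (· ∈ H)) ε hε
  let θ' : G → Perm (Fin n) := fun g => if hg : g ∈ H then θ ⟨g, hg⟩ else 1
  have hθ' : ∀ g (hg : g ∈ H), θ' g = θ ⟨g, hg⟩ := fun g hg => dif_pos hg
  refine ⟨Fin n, inferInstance, ⟨⟨0, hn⟩⟩, θ', ?_, ?_, ?_⟩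
  · intro g h hg hh hgh
    rw [hθ' g (hFH g hg), hθ' h (hFH h hh), hθ' _ (hFH _ hgh)]
    exact hmul _ _ (Finset.mem_subtype.2 hg) (Finset.mem_subtype.2 hh)
      (Finset.mem_subtype.2 hgh)
  · intro h1
    rw [hθ' 1 H.one_mem]
    exact hone (Finset.mem_subtype.2 h1)
  · intro x y hx hy hxy
    rw [hθ' x (hFH x hx), hθ' y (hFH y hy)]
    exact hsep _ _ (Finset.mem_subtype.2 hx) (Finset.mem_subtype.2 hy)
      (ne_of_apply_ne Subtype.val hxy)

theorem IsMinimalNonSofic.fg (hG : IsMinimalNonSofic G) : Group.FG G := by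
  by_contra hfg
  refine hG.1 (isSofic_of_forall_isSofic_closure fun F => hG.2 _ fun h => hfg ?_)
  exact Group.fg_iff.2 ⟨F, h, F.finite_toSet⟩

end Local

namespace Subgroup

variable {G α : Type*} [Group G] (K : Subgroup G)

noncomputable def transversalCocycle (g : G) (q : G ⧸ K) : K :=
  ⟨(g • q).out⁻¹ * (g * q.out), by
    rw [← QuotientGroup.eq, QuotientGroup.out_eq', ← smul_eq_mul,
      MulAction.Quotient.coe_smul_out]⟩

theorem transversalCocycle_mul (g h : G) (q : G ⧸ K) :
    transversalCocycle K (g * h) q = transversalCocycle K g (h • q) * transversalCocycle K h q := by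
  ext
  simp only [transversalCocycle, mul_smul, coe_mul]
  group

theorem transversalCocycle_one (q : G ⧸ K) : transversalCocycle K 1 q = 1 := by
  ext
  simp [transversalCocycle]

theorem eq_of_transversalCocycle_eq {g g' : G} {q : G ⧸ K} (hq : g • q = g' • q)
    (h : transversalCocycle K g q = transversalCocycle K g' q) : g = g' := by
  have := congrArg Subtype.val h
  simp only [transversalCocycle, hq] at this
  exact mul_right_cancel (mul_left_cancel this)

noncomputable def inducedPerm (θ : K → Perm α) (g : G) : Perm ((G ⧸ K) × α) :=
  prodShear (MulAction.toPerm g) fun q => θ (transversalCocycle K g q)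

theorem inducedPerm_mul (θ : K → Perm α) (g h : G) :
    inducedPerm K θ g * inducedPerm K θ h = prodShear (MulAction.toPerm (g * h))
      fun q => θ (transversalCocycle K g (h • q)) * θ (transversalCocycle K h q) := by
  ext ⟨q, a⟩ <;> simp [inducedPerm, mul_smul]

theorem inducedPerm_one (θ : K → Perm α) :
    inducedPerm K θ 1 = prodShear (MulAction.toPerm (1 : G)) fun _ => θ 1 := by
  simp only [inducedPerm, transversalCocycle_one]

variable {K} [K.FiniteIndex]

open Finset in
theorem isSoficApprox_inducedPerm [Finite α] {F : Finset G} {E : Finset K} {ε : ℝ}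
    {θ : K → Perm α} (hmem : ∀ g ∈ F, ∀ q, transversalCocycle K g q ∈ E)
    (hθ : IsSoficApprox E ε θ) : IsSoficApprox F ε (inducedPerm K θ) := by
  classical
  let _ : Fintype (G ⧸ K) := Fintype.ofFinite _
  obtain ⟨hmul, hone, hsep⟩ := hθ
  have hcard : (Nat.card ((G ⧸ K) × α) : ℝ) = ∑ _q : G ⧸ K, (Nat.card α : ℝ) := by
    rw [Nat.card_prod, sum_const, card_univ, ← Nat.card_eq_fintype_card, nsmul_eq_mul,
      Nat.cast_mul]
  refine ⟨fun g h hg hh hgh => ?_, fun h1 => ?_, fun x y hx hy hxy => ?_⟩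
  · rw [inducedPerm_mul, inducedPerm, hammingCount_prodShear, hcard, mul_sum]
    push_cast
    refine sum_lt_sum_of_nonempty univ_nonempty fun q _ => ?_
    have := hmul _ _ (hmem g hg _) (hmem h hh q)
      (by rw [← transversalCocycle_mul]; exact hmem _ hgh q)
    rwa [if_pos rfl, transversalCocycle_mul]
  · have h1' : (1 : Perm ((G ⧸ K) × α)) = prodShear (MulAction.toPerm (1 : G)) fun _ => 1 := by
      ext <;> simp
    rw [inducedPerm_one, h1', hammingCount_prodShear, hcard, mul_sum]
    push_cast
    refine sum_lt_sum_of_nonempty univ_nonempty fun q _ => ?_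
    rw [if_pos rfl]
    exact hone (transversalCocycle_one K q ▸ hmem 1 h1 q)
  · rw [inducedPerm, inducedPerm, hammingCount_prodShear, hcard, mul_sum]
    push_cast
    refine sum_le_sum fun q _ => ?_
    split_ifs with hq
    · exact hsep _ _ (hmem x hx q) (hmem y hy q)
        fun h => hxy (eq_of_transversalCocycle_eq K hq h)
    · linarith [(Nat.cast_nonneg (Nat.card α) : (0 : ℝ) ≤ _)]

end Subgroup

theorem IsSofic.of_finiteIndex {G : Type*} [Group G] {K : Subgroup G} [K.FiniteIndex]
    (hK : IsSofic K) : IsSofic G := by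
  classical
  let _ : Fintype (G ⧸ K) := Fintype.ofFinite _
  refine isSofic_of_forall_exists_isSoficApprox fun F ε hε => ?_
  obtain ⟨n, hn, θ, hθ⟩ := isSofic_iff_exists_fin.1 hK
    ((F ×ˢ Finset.univ).image fun p => K.transversalCocycle p.1 p.2) ε hε
  refine ⟨(G ⧸ K) × Fin n, inferInstance, ⟨((1 : G), ⟨0, hn⟩)⟩, K.inducedPerm θ,
    K.isSoficApprox_inducedPerm (fun g hg q => ?_) hθ⟩
  exact Finset.mem_image.2 ⟨(g, q), Finset.mem_product.2 ⟨hg, Finset.mem_univ q⟩, rfl⟩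

theorem IsMinimalNonSofic.eq_top_of_finiteIndex {G : Type*} [Group G] (hG : IsMinimalNonSofic G)
    (K : Subgroup G) [K.FiniteIndex] : K = ⊤ :=
  by_contra fun hK => hG.1 (hG.2 K hK).of_finiteIndex

section Quotients

variable {G : Type*} [Group G]

theorem QuotientGroup.isSimpleGroup_of_forall_normal (N : Subgroup G) [N.Normal] (hN : N ≠ ⊤)
    (hmax : ∀ H : Subgroup G, H.Normal → H ≠ ⊤ → N ≤ H → H = N) : IsSimpleGroup (G ⧸ N) := by
  have := QuotientGroup.nontrivial_iff.2 hN
  refine ⟨fun H hH => ?_⟩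
  have hinj := Subgroup.comap_injective (mk'_surjective N)
  have hle : N ≤ H.comap (mk' N) := by
    simpa only [ker_mk'] using (mk' N).ker_le_comap H
  by_cases htop : H.comap (mk' N) = ⊤
  · exact Or.inr (hinj (htop.trans (Subgroup.comap_top _).symm))
  · refine Or.inl (hinj ?_)
    rw [hmax _ (hH.comap _) htop hle, MonoidHom.comap_bot, ker_mk']

theorem exists_finiteIndex_ne_top_of_fg (A : Type*) [CommGroup A] [Group.FG A] [Nontrivial A] :
    ∃ B : Subgroup A, B.FiniteIndex ∧ B ≠ ⊤ := by
  have : Module.Finite ℤ (Additive A) := Module.Finite.iff_addGroup_fg.2 inferInstance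
  have : IsCoatomic (Subgroup A) :=
    (Subgroup.toAddSubgroup.trans AddSubgroup.toIntSubmodule).isCoatomic_iff.2 inferInstance
  obtain ⟨B, hB⟩ := IsCoatomic.exists_coatom (α := Subgroup A)
  have := QuotientGroup.isSimpleGroup_of_forall_normal B hB.1 fun H _ hH hle =>
    (hle.eq_of_not_lt fun hlt => hH (hB.2 H hlt)).symm
  have := IsSimpleGroup.finite (α := A ⧸ B)
  exact ⟨B, Subgroup.finiteIndex_of_finite_quotient, hB.1⟩

theorem commutator_eq_top_of_forall_finiteIndex [Group.FG G]
    (hG : ∀ (K : Subgroup G) [K.FiniteIndex], K = ⊤) : commutator G = ⊤ := by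
  by_contra h
  have : Nontrivial (Abelianization G) := QuotientGroup.nontrivial_iff.2 h
  have hsurj : Function.Surjective (Abelianization.of (G := G)) := QuotientGroup.mk_surjective
  have : Group.FG (Abelianization G) := Group.fg_of_surjective hsurj
  obtain ⟨B, hB, hBtop⟩ := exists_finiteIndex_ne_top_of_fg (Abelianization G)
  have : (B.comap Abelianization.of).FiniteIndex :=
    ⟨(B.index_comap_of_surjective hsurj).symm ▸ hB.index_ne_zero⟩
  exact hBtop (Subgroup.comap_injective hsurj <|
    (hG _).trans (Subgroup.comap_top _).symm)

end Quotients

section Central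

variable {G : Type*} [Group G]

def MulAut.monoidHomCongrLeftHom (M P : Type*) [Group M] [Monoid P] :
    MulAut M →* Perm (M →* P) where
  toFun e := e.monoidHomCongrLeftEquiv
  map_one' := rfl
  map_mul' _ _ := rfl

theorem finite_monoidHom_of_fg (M P : Type*) [Group M] [Monoid P] [Group.FG M] [Finite P] :
    Finite (M →* P) := by
  obtain ⟨S, hS, hSfin⟩ := Group.fg_iff.1 ‹Group.FG M›
  have : Finite S := hSfin.to_subtype
  exact Finite.of_injective (fun f : M →* P => fun s : S => f s) fun f f' h =>
    MonoidHom.eq_of_eqOn_dense hS fun s hs => congrFun h ⟨s, hs⟩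

theorem IsResiduallyFinite.residuallyFinite {M : Type*} [Group M] (h : IsResiduallyFinite M) :
    Group.ResiduallyFinite M :=
  Group.residuallyFinite_iff_exists_finiteIndex.2 fun m hm =>
    let ⟨N, _, hN, hmN⟩ := h m hm
    ⟨N, hN, hmN⟩

theorem conjNormal_mk_eq_mk {M : Subgroup G} [M.Normal] [Group.FG M]
    (hG : ∀ (K : Subgroup G) [K.FiniteIndex], K = ⊤) (N : Subgroup M) [N.Normal] [N.FiniteIndex]
    (g : G) (m : M) : ((MulAut.conjNormal g m : M) : M ⧸ N) = m := by
  have := finite_monoidHom_of_fg M (M ⧸ N)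
  let φ := (MulAut.monoidHomCongrLeftHom M (M ⧸ N)).comp MulAut.conjNormal
  have hg : g ∈ φ.ker := (hG φ.ker).symm ▸ Subgroup.mem_top g
  have := DFunLike.congr_fun (Equiv.ext_iff.1 (φ.mem_ker.1 hg) (QuotientGroup.mk' N))
    (MulAut.conjNormal g m)
  change QuotientGroup.mk' N ((MulAut.conjNormal g).symm (MulAut.conjNormal g m)) = _ at this
  rw [MulEquiv.symm_apply_apply] at this
  exact this.symm

theorem Subgroup.le_center_of_residuallyFinite (M : Subgroup G) [M.Normal] [Group.FG M]
    [Group.ResiduallyFinite M] (hG : ∀ (K : Subgroup G) [K.FiniteIndex], K = ⊤) :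
    M ≤ center G := by
  intro m hm
  rw [mem_center_iff]
  intro g
  have hconj : MulAut.conjNormal g ⟨m, hm⟩ = ⟨m, hm⟩ := by
    rw [← div_eq_one]
    refine Group.eq_one_iff_forall_finiteIndexNormalSubroup _ fun N => ?_
    rw [← FiniteIndexNormalSubgroup.mem_toSubgroup_iff, ← QuotientGroup.eq_iff_div_mem]
    exact conjNormal_mk_eq_mk hG N.toSubgroup g ⟨m, hm⟩
  have := congrArg Subtype.val hconj
  rw [MulAut.conjNormal_apply, mul_inv_eq_iff_eq_mul] at this
  exact this

end Central

/-- If `G` is minimal non-sofic and `M` is a finitely generated residually finite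
maximal normal subgroup, then `M` is central; moreover `G` is perfect and `G/M`
is a finitely generated simple group, so `G` is a perfect central extension of a
finitely generated simple group by `M`. -/
theorem minimalNonSofic_resFin_maxNormal_central (G : Type*) [Group G]
    (hG : IsMinimalNonSofic G) (M : Subgroup G) (hmax : IsMaximalNormal M)
    (hfg : Group.FG M) (hrf : IsResiduallyFinite M) :
    M ≤ Subgroup.center G ∧ commutator G = ⊤ ∧
      ∃ _ : M.Normal, Group.FG (G ⧸ M) ∧ IsSimpleGroup (G ⧸ M) := by
  obtain ⟨hnormal, hne, hmaximal⟩ := hmax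
  have := hG.fg
  have := hrf.residuallyFinite
  exact ⟨M.le_center_of_residuallyFinite hG.eq_top_of_finiteIndex,
    commutator_eq_top_of_forall_finiteIndex hG.eq_top_of_finiteIndex,
    hnormal, Group.fg_of_surjective (QuotientGroup.mk'_surjective M),
    QuotientGroup.isSimpleGroup_of_forall_normal M hne hmaximal⟩
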